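/- arXiv:2008.09231 — 2 statements merged into one kernel-verified Lean document; each statement's English description precedes it below -/
import Mathlib

section
/- In the DIBI Hilbert system, the sequent P ∗ Q ⊢ P ▷ Q is derivable for all DIBI formulas P and Q. -/
/-- Formulas of the logic DIBI. -/
inductive Formula (AP : Type*) : Type _ where
  | atom : AP → Formula AP
  | top : Formula AP
  | bot : Formula AP
  | emp : Formula AP            -- the multiplicative unit I
  | and : Formula AP → Formula AP → Formula AP
  | or : Formula AP → Formula AP → Formula AP
  | imp : Formula AP → Formula AP → Formula AP
  | sep : Formula AP → Formula AP → Formula AP      -- P ∗ Q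
  | wand : Formula AP → Formula AP → Formula AP     -- P -∗ Q
  | tri : Formula AP → Formula AP → Formula AP      -- P ▷ Q
  | triimpR : Formula AP → Formula AP → Formula AP  -- P ▷→ Q
  | triimpL : Formula AP → Formula AP → Formula AP  -- P ▷- Q
/-- The DIBI Hilbert system: derivability of sequents `P ⊢ Q`. -/
inductive Deriv {AP : Type*} : Formula AP → Formula AP → Prop where
  -- intuitionistic rules
  | ax (P : Formula AP) : Deriv P P
  | top_right (P : Formula AP) : Deriv P .top
  | bot_left (P : Formula AP) : Deriv .bot P
  | or_left {P Q R : Formula AP} : Deriv P R → Deriv Q R → Deriv (.or P Q) R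
  | or_right1 {P Q1 : Formula AP} (Q2 : Formula AP) : Deriv P Q1 → Deriv P (.or Q1 Q2)
  | or_right2 {P Q2 : Formula AP} (Q1 : Formula AP) : Deriv P Q2 → Deriv P (.or Q1 Q2)
  | and_right {P Q R : Formula AP} : Deriv P Q → Deriv P R → Deriv P (.and Q R)
  | and_left {Q R : Formula AP} (P : Formula AP) : Deriv Q R → Deriv (.and P Q) R
  | and_elim1 {P Q1 Q2 : Formula AP} : Deriv P (.and Q1 Q2) → Deriv P Q1
  | and_elim2 {P Q1 Q2 : Formula AP} : Deriv P (.and Q1 Q2) → Deriv P Q2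
  | imp_intro {P Q R : Formula AP} : Deriv (.and P Q) R → Deriv P (.imp Q R)
  | mp {P Q R : Formula AP} : Deriv P (.imp Q R) → Deriv P Q → Deriv P R
  -- adjunction and modus ponens rules for -∗, ▷→, ▷-
  | wand_intro {P Q R : Formula AP} : Deriv (.sep P Q) R → Deriv P (.wand Q R)
  | wand_mp {P Q R S : Formula AP} : Deriv P (.wand Q R) → Deriv S Q → Deriv (.sep P S) R
  | triimpR_intro {P Q R : Formula AP} : Deriv (.tri P Q) R → Deriv P (.triimpR Q R)
  | triimpR_mp {P Q R S : Formula AP} : Deriv P (.triimpR Q R) → Deriv S Q → Deriv (.tri P S) R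
  | triimpL_intro {P Q R : Formula AP} : Deriv (.tri P Q) R → Deriv Q (.triimpL P R)
  | triimpL_mp {P Q R S : Formula AP} : Deriv P (.triimpL Q R) → Deriv S Q → Deriv (.tri S P) R
  -- (∗, I) is a commutative monoid up to interderivability
  | sep_unit1 (P : Formula AP) : Deriv P (.sep P .emp)
  | sep_unit2 (P : Formula AP) : Deriv (.sep P .emp) P
  | sep_conj {P Q R S : Formula AP} : Deriv P R → Deriv Q S → Deriv (.sep P Q) (.sep R S)
  | sep_comm (P Q : Formula AP) : Deriv (.sep P Q) (.sep Q P)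
  | sep_assoc1 (P Q R : Formula AP) : Deriv (.sep (.sep P Q) R) (.sep P (.sep Q R))
  | sep_assoc2 (P Q R : Formula AP) : Deriv (.sep P (.sep Q R)) (.sep (.sep P Q) R)
  -- rules for ▷
  | tri_left_unit (P : Formula AP) : Deriv P (.tri .emp P)
  | tri_right_unit1 (P : Formula AP) : Deriv P (.tri P .emp)
  | tri_right_unit2 (P : Formula AP) : Deriv (.tri P .emp) P
  | tri_conj {P Q R S : Formula AP} : Deriv P R → Deriv Q S → Deriv (.tri P Q) (.tri R S)
  | tri_assoc1 (P Q R : Formula AP) : Deriv (.tri (.tri P Q) R) (.tri P (.tri Q R))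
  | tri_assoc2 (P Q R : Formula AP) : Deriv (.tri P (.tri Q R)) (.tri (.tri P Q) R)
  -- reverse exchange
  | rev_ex (P Q R S : Formula AP) :
      Deriv (.sep (.tri P Q) (.tri R S)) (.tri (.sep P R) (.sep Q S))


namespace Deriv

variable {AP : Type*}

theorem trans {P Q R : Formula AP} (hPQ : Deriv P Q) (hQR : Deriv Q R) : Deriv P R :=
  mp (imp_intro (and_left P hQR)) hPQ

instance : Trans (@Deriv AP) Deriv Deriv := ⟨trans⟩

theorem emp_sep (P : Formula AP) : Deriv (.sep .emp P) P :=
  (sep_comm _ _).trans (sep_unit2 P)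

end Deriv

/-- In the DIBI Hilbert system, `P ∗ Q ⊢ P ▷ Q` is derivable for all formulas. -/
theorem sep_deriv_tri {AP : Type*} (P Q : Formula AP) :
    Deriv (.sep P Q) (.tri P Q) :=
  -- pad `P` and `Q` with units so that reverse exchange applies
  calc Deriv (.sep P Q) (.sep (.tri P .emp) (.tri .emp Q)) :=
        .sep_conj (.tri_right_unit1 P) (.tri_left_unit Q)
    Deriv _ (.tri (.sep P .emp) (.sep .emp Q)) := .rev_ex P .emp .emp Q
    Deriv _ (.tri P Q) := .tri_conj (.sep_unit2 P) (.emp_sep Q)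
end

section
/- The probabilistic model is a DIBI frame: the structure (M^D, ⊑, ⊕, ⊙, M^D), where ⊕ and ⊙ are the partial deterministic parallel and sequential compositions of input-preserving Markov kernels (regarded as operations returning at most a singleton set) and the unit set is all of M^D, satisfies all twelve DIBI frame conditions; in particular ⊑ is a preorder on M^D. -/
/-- A DIBI frame: a preorder `le` on `X`, non-deterministic binary operations
`oplus` and `odot`, and a set of units `E`, satisfying the twelve DIBI frame conditions. -/
structure IsDIBIFrame {X : Type*} (le : X → X → Prop) (oplus odot : X → X → Set X)
    (E : Set X) : Prop where
  le_refl : ∀ x, le x x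
  le_trans : ∀ x y z, le x y → le y z → le x z
  oplus_down : ∀ x y z x' y', z ∈ oplus x y → le x' x → le y' y →
    ∃ z', le z' z ∧ z' ∈ oplus x' y'
  odot_up : ∀ x y z z', z ∈ odot x y → le z z' →
    ∃ x' y', le x x' ∧ le y y' ∧ z' ∈ odot x' y'
  oplus_comm : ∀ x y z, z ∈ oplus x y → z ∈ oplus y x
  oplus_assoc : ∀ x y z t w, w ∈ oplus t z → t ∈ oplus x y →
    ∃ s, s ∈ oplus y z ∧ w ∈ oplus x s
  oplus_unit_exists : ∀ x, ∃ e ∈ E, x ∈ oplus e x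
  oplus_unit_coherence : ∀ e x y, e ∈ E → x ∈ oplus y e → le y x
  odot_assoc : ∀ x y z w, (∃ t, w ∈ odot t z ∧ t ∈ odot x y) ↔
    (∃ s, s ∈ odot y z ∧ w ∈ odot x s)
  odot_unit_exists_left : ∀ x, ∃ e ∈ E, x ∈ odot e x
  odot_unit_exists_right : ∀ x, ∃ e ∈ E, x ∈ odot x e
  odot_coherence_right : ∀ e x y, e ∈ E → x ∈ odot y e → le y x
  unit_closure : ∀ e e', e ∈ E → le e e' → e' ∈ E
  rev_exchange : ∀ x y z y1 y2 z1 z2, x ∈ oplus y z → y ∈ odot y1 y2 → z ∈ odot z1 z2 →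
    ∃ u v, u ∈ oplus y1 z1 ∧ v ∈ oplus y2 z2 ∧ x ∈ odot u v
open scoped ENNReal

/-- A memory over a set `S` of variables: an assignment of a value to each
variable in `S`. -/
def Mem (Val Var : Type) (S : Set Var) : Type := S → Val

/-- Restriction (projection) of a memory to a smaller domain. -/
def restr {Val Var : Type} {S T : Set Var} (h : T ⊆ S) (m : Mem Val Var S) :
    Mem Val Var T :=
  fun t => m ⟨t.1, h t.2⟩

/-- Two memories (over possibly different domains) agree if they coincide on the
intersection of their domains.  For `T ⊆ S`, `Agree m r` says exactly that `r`
is the restriction `m^T`. -/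
def Agree {Val Var : Type} {S T : Set Var} (m : Mem Val Var S) (r : Mem Val Var T) : Prop :=
  ∀ (i : Var) (h1 : i ∈ S) (h2 : i ∈ T), m ⟨i, h1⟩ = r ⟨i, h2⟩
/-- A (sub)distribution as a mass function into `ℝ≥0∞`; `IsDist μ` says the total
mass is `1`, i.e. `μ` is a (finitely supported, as all types involved are finite)
probability distribution. -/
def IsDist {α : Type*} (μ : α → ℝ≥0∞) : Prop := ∑' a, μ a = 1

open Classical in
/-- Marginalization of a mass function on memories over `S` to memories over `T`
(intended for `T ⊆ S`). -/
noncomputable def marg {Val Var : Type} {S : Set Var} (μ : Mem Val Var S → ℝ≥0∞)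
    (T : Set Var) : Mem Val Var T → ℝ≥0∞ :=
  fun r => ∑' m : Mem Val Var S, if Agree m r then μ m else 0

open Classical in
/-- The point mass (Dirac distribution) at a memory. -/
noncomputable def dirac {Val Var : Type} {S : Set Var} (d : Mem Val Var S) :
    Mem Val Var S → ℝ≥0∞ :=
  fun r => if r = d then 1 else 0

/-- A Markov-kernel-shaped map on memories, with explicit domain and range. -/
structure PKernel (Val Var : Type) where
  dom : Set Var
  ran : Set Var
  f : Mem Val Var dom → Mem Val Var ran → ℝ≥0∞

/-- Membership in `M^D`: `K` is a Markov kernel (every output is a probability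
distribution) that preserves its input to its output (the marginal of `K.f d`
on the domain is the point mass at `d`). -/
def InMD {Val Var : Type} (K : PKernel Val Var) : Prop :=
  K.dom ⊆ K.ran ∧ (∀ d, IsDist (K.f d)) ∧ (∀ d, marg (K.f d) K.dom = dirac d)

/-- Definedness condition for parallel composition. -/
def OplusDef {Val Var : Type} (K1 K2 : PKernel Val Var) : Prop :=
  K1.ran ∩ K2.ran = K1.dom ∩ K2.dom

/-- Parallel composition of kernels. -/
noncomputable def poplus {Val Var : Type} (K1 K2 : PKernel Val Var) : PKernel Val Var where
  dom := K1.dom ∪ K2.dom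
  ran := K1.ran ∪ K2.ran
  f := fun d m =>
    K1.f (restr Set.subset_union_left d) (restr Set.subset_union_left m) *
    K2.f (restr Set.subset_union_right d) (restr Set.subset_union_right m)

open Classical in
/-- Sequential (Kleisli) composition of kernels, defined when
`K1.ran = K2.dom` (and returning the zero kernel otherwise). -/
noncomputable def podot {Val Var : Type} (K1 K2 : PKernel Val Var) : PKernel Val Var where
  dom := K1.dom
  ran := K2.ran
  f := fun d m =>
    if h : K1.ran = K2.dom then
      ∑' m' : Mem Val Var K1.ran, K1.f d m' * K2.f (restr (le_of_eq h.symm) m') m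
    else 0

open Classical in
/-- The identity (unit) kernel on memories over `R`. -/
noncomputable def unitK (Val Var : Type) (R : Set Var) : PKernel Val Var where
  dom := R
  ran := R
  f := fun d => dirac d

/-- The preorder on kernels: `f ⊑ g` iff `g = (f ⊕ unit_R) ⊙ h` for some set of
variables `R` and some `h ∈ M^D` (with both compositions defined). -/
def ple {Val Var : Type} (K1 K2 : PKernel Val Var) : Prop :=
  ∃ (R : Set Var) (h : PKernel Val Var), InMD h ∧
    OplusDef K1 (unitK Val Var R) ∧
    (poplus K1 (unitK Val Var R)).ran = h.dom ∧
    K2 = podot (poplus K1 (unitK Val Var R)) h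

/-- The carrier of the probabilistic model: input-preserving Markov kernels. -/
def MD (Val Var : Type) : Type := {K : PKernel Val Var // InMD K}

/-- Parallel composition, as a non-deterministic (in fact, partial deterministic)
operation on `M^D`: the singleton of `x ⊕ y` when defined, and `∅` otherwise. -/
noncomputable def mdOplus {Val Var : Type} (x y : MD Val Var) : Set (MD Val Var) :=
  {z | OplusDef x.1 y.1 ∧ z.1 = poplus x.1 y.1}

/-- Sequential composition, as a non-deterministic (in fact, partial deterministic)
operation on `M^D`: the singleton of `x ⊙ y` when defined, and `∅` otherwise. -/
noncomputable def mdOdot {Val Var : Type} (x y : MD Val Var) : Set (MD Val Var) :=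
  {z | x.1.ran = y.1.dom ∧ z.1 = podot x.1 y.1}

/-! Every frame condition reduces to algebraic identities between kernels: associativity and
commutativity of `⊕`, associativity and unit laws of `⊙`, and the exchange law
`(a ⊙ b) ⊕ (c ⊙ d) = (a ⊕ c) ⊙ (b ⊕ d)`. Input preservation is what makes the exchange law
hold: an input-preserving kernel only outputs memories extending its input, so when `a` and `c`
share no variables beyond their inputs, every pair of intermediate memories with nonzero weight
agrees, and the sum over memories on the union of the ranges factors into the product of the two
sums. The preorder conditions then follow by pushing the padding kernels `unit_R` through these
identities, the definedness side conditions being elementary set algebra. -/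

section Memories

variable {Val Var : Type}

lemma agree_iff_restr_eq {S T : Set Var} (h : T ⊆ S) {m : Mem Val Var S}
    {r : Mem Val Var T} : Agree m r ↔ restr h m = r :=
  ⟨fun hmr => funext fun t => hmr t.1 (h t.2) t.2, fun hmr _ _ _ => hmr ▸ rfl⟩

lemma agree_restr {S T : Set Var} (h : T ⊆ S) (m : Mem Val Var S) : Agree m (restr h m) :=
  fun _ _ _ => rfl

lemma Agree.trans {S T U : Set Var} {a : Mem Val Var S} {b : Mem Val Var T}
    {c : Mem Val Var U} (hab : Agree a b) (hbc : Agree b c) (h : S ∩ U ⊆ T) : Agree a c :=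
  fun i hS hU => (hab i hS (h ⟨hS, hU⟩)).trans (hbc i _ hU)

lemma Agree.restr_left {S T U : Set Var} (h : T ⊆ S) {m : Mem Val Var S}
    {r : Mem Val Var U} (hmr : Agree m r) : Agree (restr h m) r :=
  fun i hT hU => hmr i (h hT) hU

lemma agree_union_of_agree {A B C D : Set Var} (hCA : C ⊆ A) (hDB : D ⊆ B)
    {m : Mem Val Var (A ∪ B)} {r : Mem Val Var (C ∪ D)}
    (hl : Agree (restr Set.subset_union_left m) (restr Set.subset_union_left r))
    (hr : Agree (restr Set.subset_union_right m) (restr Set.subset_union_right r)) :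
    Agree m r := by
  rintro i - (hC | hD)
  · exact hl i (hCA hC) hC
  · exact hr i (hDB hD) hD

lemma restr_union_injective (A B : Set Var) :
    Function.Injective fun m : Mem Val Var (A ∪ B) =>
      (restr Set.subset_union_left m, restr Set.subset_union_right m) := by
  intro m m' h
  simp only [Prod.mk.injEq] at h
  funext ⟨i, hi⟩
  rcases hi with hA | hB
  · exact congrFun h.1 ⟨i, hA⟩
  · exact congrFun h.2 ⟨i, hB⟩

open Classical in
lemma exists_restr_union_eq {A B : Set Var} {m₁ : Mem Val Var A} {m₂ : Mem Val Var B}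
    (h : Agree m₁ m₂) :
    ∃ m : Mem Val Var (A ∪ B),
      restr Set.subset_union_left m = m₁ ∧ restr Set.subset_union_right m = m₂ := by
  refine ⟨fun i => if hA : i.1 ∈ A then m₁ ⟨i, hA⟩ else m₂ ⟨i, i.2.resolve_left hA⟩,
    funext fun i => dif_pos i.2, funext fun i => ?_⟩
  by_cases hA : i.1 ∈ A
  · exact (dif_pos hA).trans (h i hA i.2)
  · exact dif_neg hA

/-- Memories on `A ∪ B` are exactly the agreeing pairs of memories on `A` and `B`. -/
lemma tsum_union_mul {A B : Set Var} (F : Mem Val Var A → ℝ≥0∞) (G : Mem Val Var B → ℝ≥0∞)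
    (hFG : ∀ m₁ m₂, F m₁ ≠ 0 → G m₂ ≠ 0 → Agree m₁ m₂) :
    ∑' m : Mem Val Var (A ∪ B),
      F (restr Set.subset_union_left m) * G (restr Set.subset_union_right m)
      = (∑' m₁, F m₁) * ∑' m₂, G m₂ := by
  have hsupp : Function.support (fun p : Mem Val Var A × Mem Val Var B => F p.1 * G p.2) ⊆
      Set.range fun m : Mem Val Var (A ∪ B) =>
        (restr Set.subset_union_left m, restr Set.subset_union_right m) := by
    rintro ⟨m₁, m₂⟩ hp
    obtain ⟨hF, hG⟩ := mul_ne_zero_iff.mp hp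
    obtain ⟨m, h₁, h₂⟩ := exists_restr_union_eq (hFG m₁ m₂ hF hG)
    exact ⟨m, Prod.ext h₁ h₂⟩
  rw [(restr_union_injective A B).tsum_eq hsupp, ENNReal.tsum_prod (f := fun a b => F a * G b),
    ← ENNReal.tsum_mul_right]
  exact tsum_congr fun _ => ENNReal.tsum_mul_left

end Memories

section Dirac

variable {Val Var : Type}

lemma dirac_apply_self {S : Set Var} (d : Mem Val Var S) : dirac d d = 1 := if_pos rfl

lemma dirac_apply_of_ne {S : Set Var} {d r : Mem Val Var S} (h : r ≠ d) : dirac d r = 0 :=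
  if_neg h

lemma dirac_ne_zero_iff {S : Set Var} {d r : Mem Val Var S} : dirac d r ≠ 0 ↔ r = d := by
  unfold dirac
  split_ifs with h <;> simp [h]

open Classical in
lemma tsum_dirac {S : Set Var} (d : Mem Val Var S) : ∑' r, dirac d r = 1 :=
  tsum_ite_eq d (fun _ => 1)

lemma dirac_union {A B : Set Var} (d r : Mem Val Var (A ∪ B)) :
    dirac (restr Set.subset_union_left d) (restr Set.subset_union_left r) *
      dirac (restr Set.subset_union_right d) (restr Set.subset_union_right r) = dirac d r := by
  by_cases h : r = d
  · rw [h, dirac_apply_self, dirac_apply_self, dirac_apply_self, one_mul]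
  · rw [dirac_apply_of_ne h, mul_eq_zero]
    by_contra! hne
    exact h (restr_union_injective A B
      (Prod.ext (dirac_ne_zero_iff.mp hne.1) (dirac_ne_zero_iff.mp hne.2)))

end Dirac

namespace PKernel

variable {Val Var : Type}

lemma podot_f (K₁ K₂ : PKernel Val Var) (h : K₁.ran = K₂.dom) (d : Mem Val Var K₁.dom)
    (m : Mem Val Var K₂.ran) :
    (podot K₁ K₂).f d m = ∑' m', K₁.f d m' * K₂.f (restr h.ge m') m :=
  dif_pos h

@[simp] lemma poplus_dom (K₁ K₂ : PKernel Val Var) : (poplus K₁ K₂).dom = K₁.dom ∪ K₂.dom :=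
  rfl

@[simp] lemma poplus_ran (K₁ K₂ : PKernel Val Var) : (poplus K₁ K₂).ran = K₁.ran ∪ K₂.ran :=
  rfl

@[simp] lemma podot_dom (K₁ K₂ : PKernel Val Var) : (podot K₁ K₂).dom = K₁.dom := rfl

@[simp] lemma podot_ran (K₁ K₂ : PKernel Val Var) : (podot K₁ K₂).ran = K₂.ran := rfl

@[simp] lemma unitK_dom (R : Set Var) : (unitK Val Var R).dom = R := rfl

@[simp] lemma unitK_ran (R : Set Var) : (unitK Val Var R).ran = R := rfl

def ExtendsInput (K : PKernel Val Var) : Prop :=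
  ∀ d m, K.f d m ≠ 0 → Agree m d

lemma marg_eq_dirac_iff {K : PKernel Val Var} (hK : K.dom ⊆ K.ran)
    (hdist : ∀ d, IsDist (K.f d)) :
    (∀ d, marg (K.f d) K.dom = dirac d) ↔ K.ExtendsInput := by
  constructor
  · intro hmarg d m hm
    by_contra hne
    rw [agree_iff_restr_eq hK] at hne
    have hle : K.f d m ≤ marg (K.f d) K.dom (restr hK m) :=
      (if_pos (agree_restr hK m)).symm.le.trans (ENNReal.le_tsum m)
    rw [hmarg d, dirac_apply_of_ne hne] at hle
    exact hm (le_zero_iff.mp hle)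
  · intro hext d
    funext r
    classical
    calc marg (K.f d) K.dom r = ∑' m, if r = d then K.f d m else 0 := by
          refine tsum_congr fun m => ?_
          by_cases hm : K.f d m = 0
          · simp [hm]
          · have hmd := (agree_iff_restr_eq hK).mp (hext d m hm)
            simp only [agree_iff_restr_eq hK, hmd, eq_comm]
      _ = dirac d r := by
          by_cases hr : r = d
          · simp only [hr, if_true, dirac_apply_self]
            exact hdist d
          · simp [hr, dirac_apply_of_ne]

lemma _root_.InMD.extendsInput {K : PKernel Val Var} (hK : InMD K) : K.ExtendsInput :=
  (marg_eq_dirac_iff hK.1 hK.2.1).mp hK.2.2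

lemma _root_.InMD.of_extendsInput {K : PKernel Val Var} (hK : K.dom ⊆ K.ran)
    (hdist : ∀ d, IsDist (K.f d)) (hext : K.ExtendsInput) : InMD K :=
  ⟨hK, hdist, (marg_eq_dirac_iff hK hdist).mpr hext⟩

lemma ExtendsInput.agree_of_ne_zero {K₁ K₂ : PKernel Val Var} (h₁ : K₁.ExtendsInput)
    (h₂ : K₂.ExtendsInput) (hov : K₁.ran ∩ K₂.ran ⊆ K₁.dom ∩ K₂.dom)
    {d₁ : Mem Val Var K₁.dom} {d₂ : Mem Val Var K₂.dom} {m₁ : Mem Val Var K₁.ran}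
    {m₂ : Mem Val Var K₂.ran} (hd : Agree d₁ d₂) (hm₁ : K₁.f d₁ m₁ ≠ 0)
    (hm₂ : K₂.f d₂ m₂ ≠ 0) : Agree m₁ m₂ := fun i hi₁ hi₂ =>
  have hi := hov ⟨hi₁, hi₂⟩
  (h₁ _ _ hm₁ i hi₁ hi.1).trans ((hd i hi.1 hi.2).trans (h₂ _ _ hm₂ i hi₂ hi.2).symm)

lemma inMD_unitK (R : Set Var) : InMD (unitK Val Var R) := by
  refine .of_extendsInput subset_rfl tsum_dirac fun (d m : Mem Val Var R) hm => ?_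
  exact (agree_iff_restr_eq subset_rfl).mpr (dirac_ne_zero_iff.mp hm)

lemma inMD_poplus {K₁ K₂ : PKernel Val Var} (h₁ : InMD K₁) (h₂ : InMD K₂)
    (hop : OplusDef K₁ K₂) : InMD (poplus K₁ K₂) := by
  refine .of_extendsInput (Set.union_subset_union h₁.1 h₂.1) (fun d => ?_) fun d m hm => ?_
  · refine (tsum_union_mul _ _ fun m₁ m₂ hm₁ hm₂ => ?_).trans (by rw [h₁.2.1, h₂.2.1, one_mul])
    exact h₁.extendsInput.agree_of_ne_zero h₂.extendsInput hop.le (fun _ _ _ => rfl) hm₁ hm₂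
  · obtain ⟨hm₁, hm₂⟩ := mul_ne_zero_iff.mp hm
    exact agree_union_of_agree h₁.1 h₂.1 (h₁.extendsInput _ _ hm₁) (h₂.extendsInput _ _ hm₂)

lemma inMD_podot {K₁ K₂ : PKernel Val Var} (h₁ : InMD K₁) (h₂ : InMD K₂)
    (h : K₁.ran = K₂.dom) : InMD (podot K₁ K₂) := by
  have hdom : K₁.dom ⊆ K₂.dom := h ▸ h₁.1
  refine .of_extendsInput (hdom.trans h₂.1) (fun (d : Mem Val Var K₁.dom) => ?_)
    fun (d : Mem Val Var K₁.dom) (m : Mem Val Var K₂.ran) hm => ?_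
  · calc ∑' m : Mem Val Var K₂.ran, (podot K₁ K₂).f d m
        = ∑' m, ∑' m', K₁.f d m' * K₂.f (restr h.ge m') m :=
          tsum_congr fun m => podot_f K₁ K₂ h d m
      _ = ∑' m', K₁.f d m' * ∑' m, K₂.f (restr h.ge m') m := by
          simp only [← ENNReal.tsum_mul_left]
          exact ENNReal.tsum_comm
      _ = ∑' m', K₁.f d m' := by simp only [show ∀ d, ∑' m, K₂.f d m = 1 from h₂.2.1, mul_one]
      _ = 1 := h₁.2.1 d
  · obtain ⟨m', hm'⟩ :=
      not_forall.mp (mt ENNReal.tsum_eq_zero.mpr ((podot_f K₁ K₂ h d m).symm.trans_ne hm))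
    obtain ⟨hm₁, hm₂⟩ := mul_ne_zero_iff.mp hm'
    exact (h₂.extendsInput _ _ hm₂).trans ((h₁.extendsInput _ _ hm₁).restr_left h.ge)
      fun i hi => hdom hi.2

lemma ext {K₁ K₂ : PKernel Val Var} (hd : K₁.dom = K₂.dom) (hr : K₁.ran = K₂.ran)
    (hf : ∀ d m, K₁.f d m = K₂.f (restr hd.ge d) (restr hr.ge m)) : K₁ = K₂ := by
  obtain ⟨D, R, f⟩ := K₁
  obtain ⟨D', R', f'⟩ := K₂
  dsimp only at hd hr hf
  subst hd hr
  exact congrArg (PKernel.mk D R) (funext₂ hf)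

lemma poplus_comm (K₁ K₂ : PKernel Val Var) : poplus K₁ K₂ = poplus K₂ K₁ :=
  ext (Set.union_comm _ _) (Set.union_comm _ _) fun _ _ => mul_comm _ _

lemma poplus_assoc (K₁ K₂ K₃ : PKernel Val Var) :
    poplus (poplus K₁ K₂) K₃ = poplus K₁ (poplus K₂ K₃) :=
  ext (Set.union_assoc _ _ _) (Set.union_assoc _ _ _) fun _ _ => mul_assoc _ _ _

lemma poplus_poplus_poplus_comm (a b c d : PKernel Val Var) :
    poplus (poplus a b) (poplus c d) = poplus (poplus a c) (poplus b d) := by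
  rw [poplus_assoc, ← poplus_assoc b, poplus_comm b c, poplus_assoc c, ← poplus_assoc]

lemma unitK_union (R R' : Set Var) :
    unitK Val Var (R ∪ R') = poplus (unitK Val Var R) (unitK Val Var R') :=
  ext rfl rfl fun d m => (dirac_union d m).symm

lemma poplus_unitK_empty (K : PKernel Val Var) : poplus K (unitK Val Var ∅) = K := by
  refine ext (Set.union_empty _) (Set.union_empty _)
    fun (d : Mem Val Var (K.dom ∪ ∅)) (m : Mem Val Var (K.ran ∪ ∅)) => ?_
  have hm : restr (T := ∅) Set.subset_union_right m = restr Set.subset_union_right d :=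
    funext fun i => absurd i.2 (Set.notMem_empty _)
  calc (poplus K (unitK Val Var ∅)).f d m
      = K.f (restr Set.subset_union_left d) (restr Set.subset_union_left m) *
          dirac (restr Set.subset_union_right d) (restr Set.subset_union_right m) := rfl
    _ = K.f (restr Set.subset_union_left d) (restr Set.subset_union_left m) := by
      rw [hm, dirac_apply_self, mul_one]

lemma unitK_podot (K : PKernel Val Var) : podot (unitK Val Var K.dom) K = K := by
  refine ext rfl rfl fun (d : Mem Val Var K.dom) (m : Mem Val Var K.ran) => ?_
  calc (podot (unitK Val Var K.dom) K).f d m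
      = ∑' m' : Mem Val Var K.dom, dirac d m' * K.f m' m :=
        podot_f (unitK Val Var K.dom) K rfl d m
    _ = K.f d m := by
      rw [tsum_eq_single d fun m' hm' => by rw [dirac_apply_of_ne hm', zero_mul],
        dirac_apply_self, one_mul]

lemma podot_unitK (K : PKernel Val Var) : podot K (unitK Val Var K.ran) = K := by
  refine ext rfl rfl fun (d : Mem Val Var K.dom) (m : Mem Val Var K.ran) => ?_
  calc (podot K (unitK Val Var K.ran)).f d m
      = ∑' m' : Mem Val Var K.ran, K.f d m' * dirac m' m :=
        podot_f K (unitK Val Var K.ran) rfl d m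
    _ = K.f d m := by
      rw [tsum_eq_single m fun m' hm' => by rw [dirac_apply_of_ne hm'.symm, mul_zero],
        dirac_apply_self, mul_one]

lemma podot_assoc {a b c : PKernel Val Var} (hab : a.ran = b.dom) (hbc : b.ran = c.dom) :
    podot (podot a b) c = podot a (podot b c) := by
  refine ext rfl rfl fun (x : Mem Val Var a.dom) (m : Mem Val Var c.ran) => ?_
  calc (podot (podot a b) c).f x m
      = ∑' m₂, (podot a b).f x m₂ * c.f (restr hbc.ge m₂) m :=
        podot_f (podot a b) c hbc x m
    _ = ∑' m₂, (∑' m₁, a.f x m₁ * b.f (restr hab.ge m₁) m₂) * c.f (restr hbc.ge m₂) m :=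
      tsum_congr fun m₂ => congrArg (· * _) (podot_f a b hab x m₂)
    _ = ∑' m₁, a.f x m₁ * ∑' m₂, b.f (restr hab.ge m₁) m₂ * c.f (restr hbc.ge m₂) m := by
      simp only [← ENNReal.tsum_mul_right, ← ENNReal.tsum_mul_left, mul_assoc]
      exact ENNReal.tsum_comm
    _ = ∑' m₁, a.f x m₁ * (podot b c).f (restr hab.ge m₁) m :=
      tsum_congr fun m₁ => congrArg (_ * ·) (podot_f b c hbc _ m).symm
    _ = (podot a (podot b c)).f x m := (podot_f a (podot b c) hab x m).symm

lemma podot_poplus_podot {a b c d : PKernel Val Var} (ha : a.ExtendsInput)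
    (hc : c.ExtendsInput) (hab : a.ran = b.dom) (hcd : c.ran = d.dom)
    (hov : a.ran ∩ c.ran ⊆ a.dom ∩ c.dom) :
    poplus (podot a b) (podot c d) = podot (poplus a c) (poplus b d) := by
  have hran : (poplus a c).ran = (poplus b d).dom := by rw [poplus_ran, hab, hcd]; rfl
  refine ext rfl rfl
    fun (x : Mem Val Var (a.dom ∪ c.dom)) (m : Mem Val Var (b.ran ∪ d.ran)) => ?_
  let x₁ := restr Set.subset_union_left x
  let x₂ := restr Set.subset_union_right x
  let n₁ := restr Set.subset_union_left m
  let n₂ := restr Set.subset_union_right m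
  calc (poplus (podot a b) (podot c d)).f x m
      = (∑' m₁, a.f x₁ m₁ * b.f (restr hab.ge m₁) n₁) *
          ∑' m₂, c.f x₂ m₂ * d.f (restr hcd.ge m₂) n₂ :=
        congrArg₂ (· * ·) (podot_f a b hab x₁ n₁) (podot_f c d hcd x₂ n₂)
    _ = ∑' m' : Mem Val Var (a.ran ∪ c.ran),
          a.f x₁ (restr Set.subset_union_left m') *
            b.f (restr hab.ge (restr Set.subset_union_left m')) n₁ *
          (c.f x₂ (restr Set.subset_union_right m') *
            d.f (restr hcd.ge (restr Set.subset_union_right m')) n₂) := by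
      refine (tsum_union_mul _ _ fun m₁ m₂ hm₁ hm₂ => ?_).symm
      exact ha.agree_of_ne_zero hc hov (fun _ _ _ => rfl)
        (left_ne_zero_of_mul hm₁) (left_ne_zero_of_mul hm₂)
    _ = ∑' m', (poplus a c).f x m' * (poplus b d).f (restr hran.ge m') m :=
      tsum_congr fun _ => mul_mul_mul_comm _ _ _ _
    _ = (podot (poplus a c) (poplus b d)).f x m := (podot_f (poplus a c) (poplus b d) hran x m).symm

lemma podot_poplus_unitK {a b : PKernel Val Var} (ha : a.ExtendsInput) (hab : a.ran = b.dom)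
    {R : Set Var} (hR : a.ran ∩ R ⊆ a.dom ∩ R) :
    poplus (podot a b) (unitK Val Var R) =
      podot (poplus a (unitK Val Var R)) (poplus b (unitK Val Var R)) := by
  conv_lhs => rw [← podot_unitK (unitK Val Var R)]
  exact podot_poplus_podot ha (inMD_unitK R).extendsInput hab rfl hR

end PKernel

section Preorder

variable {Val Var : Type}

open PKernel

lemma ple_podot {K e : PKernel Val Var} (he : InMD e) (h : K.ran = e.dom) : ple K (podot K e) :=
  ⟨∅, e, he, (Set.inter_empty _).trans (Set.inter_empty _).symm, (Set.union_empty _).trans h,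
    by rw [poplus_unitK_empty]⟩

lemma ple_refl (K : PKernel Val Var) : ple K K := by
  simpa only [podot_unitK] using ple_podot (inMD_unitK K.ran) rfl

lemma ple_poplus {y e : PKernel Val Var} (hy : InMD y) (he : InMD e) (hop : OplusDef y e) :
    ple y (poplus y e) := by
  obtain ⟨hye, hue⟩ : y.ran ∩ e.dom = y.dom ∩ e.dom ∧ OplusDef (unitK Val Var y.ran) e := by
    have := he.1; have := hy.1
    simp only [OplusDef, unitK_ran, unitK_dom, Set.ext_iff, Set.subset_def,
      Set.mem_inter_iff] at *
    grind
  refine ⟨e.dom, poplus (unitK Val Var y.ran) e, inMD_poplus (inMD_unitK _) he hue, hye, rfl, ?_⟩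
  calc poplus y e = poplus (podot y (unitK Val Var y.ran)) (podot (unitK Val Var e.dom) e) := by
        rw [podot_unitK, unitK_podot]
    _ = _ := podot_poplus_podot hy.extendsInput (inMD_unitK _).extendsInput rfl rfl hye.le

lemma ple_trans {x y z : PKernel Val Var} (hx : InMD x) (hxy : ple x y) (hyz : ple y z) :
    ple x z := by
  obtain ⟨R, h, hh, hxR, hxh, rfl⟩ := hxy
  obtain ⟨R', h', hh', hyR', hyh', rfl⟩ := hyz
  obtain ⟨hhR', hxRR', hran, hov⟩ : OplusDef h (unitK Val Var R') ∧
      OplusDef x (unitK Val Var (R ∪ R')) ∧ x.ran ∪ (R ∪ R') = h.dom ∪ R' ∧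
      (x.ran ∪ R) ∩ R' ⊆ (x.dom ∪ R) ∩ R' := by
    have := hx.1; have := hh.1
    simp only [OplusDef, poplus_ran, poplus_dom, podot_ran, podot_dom, unitK_ran, unitK_dom,
      Set.ext_iff, Set.subset_def, Set.mem_inter_iff, Set.mem_union] at *
    grind
  refine ⟨R ∪ R', podot (poplus h (unitK Val Var R')) h',
    inMD_podot (inMD_poplus hh (inMD_unitK R') hhR') hh' hyh', hxRR', hran, ?_⟩
  rw [podot_poplus_unitK (inMD_poplus hx (inMD_unitK R) hxR).extendsInput hxh hov,
    podot_assoc (b := poplus h (unitK Val Var R')) (congrArg (· ∪ R') hxh) hyh',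
    poplus_assoc, ← unitK_union]

lemma poplus_mono {x y x' y' : PKernel Val Var} (hx' : InMD x') (hy' : InMD y')
    (hxx : ple x' x) (hyy : ple y' y) (hop : OplusDef x y) :
    OplusDef x' y' ∧ ple (poplus x' y') (poplus x y) := by
  obtain ⟨R, h, hh, hxR, hxh, rfl⟩ := hxx
  obtain ⟨R', h', hh', hyR', hyh', rfl⟩ := hyy
  obtain ⟨hop', hopR, hhh', hran, hov⟩ : OplusDef x' y' ∧
      OplusDef (poplus x' y') (unitK Val Var (R ∪ R')) ∧ OplusDef h h' ∧
      x'.ran ∪ y'.ran ∪ (R ∪ R') = h.dom ∪ h'.dom ∧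
      (x'.ran ∪ R) ∩ (y'.ran ∪ R') ⊆ (x'.dom ∪ R) ∩ (y'.dom ∪ R') := by
    have := hx'.1; have := hy'.1; have := hh.1; have := hh'.1
    simp only [OplusDef, poplus_ran, poplus_dom, podot_ran, podot_dom, unitK_ran, unitK_dom,
      Set.ext_iff, Set.subset_def, Set.mem_inter_iff, Set.mem_union] at *
    grind
  refine ⟨hop', R ∪ R', poplus h h', inMD_poplus hh hh' hhh', hopR, hran, ?_⟩
  rw [podot_poplus_podot (inMD_poplus hx' (inMD_unitK R) hxR).extendsInput
    (inMD_poplus hy' (inMD_unitK R') hyR').extendsInput hxh hyh' hov,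
    poplus_poplus_poplus_comm, ← unitK_union]

lemma exists_podot_eq_of_podot_ple {x y z : PKernel Val Var} (hx : InMD x) (hy : InMD y)
    (hxy : x.ran = y.dom) (hz : ple (podot x y) z) :
    ∃ x' y', InMD x' ∧ InMD y' ∧ ple x x' ∧ ple y y' ∧ x'.ran = y'.dom ∧
      z = podot x' y' := by
  obtain ⟨R, h, hh, hR, hRh, rfl⟩ := hz
  obtain ⟨hxR, hyR⟩ : OplusDef x (unitK Val Var R) ∧ OplusDef y (unitK Val Var R) := by
    have := hx.1; have := hy.1
    simp only [OplusDef, podot_ran, podot_dom, unitK_ran, unitK_dom,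
      Set.ext_iff, Set.subset_def, Set.mem_inter_iff] at *
    grind
  have hxR' : (poplus x (unitK Val Var R)).ran = (poplus y (unitK Val Var R)).dom :=
    congrArg (· ∪ R) hxy
  refine ⟨_, _, inMD_poplus hx (inMD_unitK R) hxR,
    inMD_podot (inMD_poplus hy (inMD_unitK R) hyR) hh hRh, ple_poplus hx (inMD_unitK R) hxR,
    ⟨R, h, hh, hyR, hRh, rfl⟩, hxR', ?_⟩
  rw [podot_poplus_unitK (R := R) hx.extendsInput hxy hxR.le,
    podot_assoc (b := poplus y (unitK Val Var R)) hxR' hRh]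

end Preorder

namespace MD

variable {Val Var : Type}

open PKernel

lemma oplus_down {x y z x' y' : MD Val Var} (hz : z ∈ mdOplus x y) (hx : ple x'.1 x.1)
    (hy : ple y'.1 y.1) : ∃ z' : MD Val Var, ple z'.1 z.1 ∧ z' ∈ mdOplus x' y' := by
  obtain ⟨hop, hz⟩ := hz
  obtain ⟨hop', hle⟩ := poplus_mono x'.2 y'.2 hx hy hop
  exact ⟨⟨_, inMD_poplus x'.2 y'.2 hop'⟩, hz ▸ hle, hop', rfl⟩

lemma odot_up {x y z z' : MD Val Var} (hz : z ∈ mdOdot x y) (hzz : ple z.1 z'.1) :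
    ∃ x' y' : MD Val Var, ple x.1 x'.1 ∧ ple y.1 y'.1 ∧ z' ∈ mdOdot x' y' := by
  obtain ⟨hxy, hz⟩ := hz
  rw [hz] at hzz
  obtain ⟨x', y', hx', hy', hxx, hyy, hxy', hz'⟩ :=
    exists_podot_eq_of_podot_ple x.2 y.2 hxy hzz
  exact ⟨⟨x', hx'⟩, ⟨y', hy'⟩, hxx, hyy, hxy', hz'⟩

lemma oplus_comm {x y z : MD Val Var} (hz : z ∈ mdOplus x y) : z ∈ mdOplus y x :=
  ⟨(Set.inter_comm _ _).trans (hz.1.trans (Set.inter_comm _ _)), hz.2.trans (poplus_comm _ _)⟩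

lemma oplus_assoc {x y z t w : MD Val Var} (hw : w ∈ mdOplus t z) (ht : t ∈ mdOplus x y) :
    ∃ s, s ∈ mdOplus y z ∧ w ∈ mdOplus x s := by
  obtain ⟨htz, hw⟩ := hw
  obtain ⟨hxy, ht⟩ := ht
  rw [ht] at htz hw
  obtain ⟨hyz, hxyz⟩ : OplusDef y.1 z.1 ∧ OplusDef x.1 (poplus y.1 z.1) := by
    have := x.2.1; have := y.2.1; have := z.2.1
    simp only [OplusDef, poplus_ran, poplus_dom, Set.ext_iff, Set.subset_def,
      Set.mem_inter_iff, Set.mem_union] at *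
    grind
  exact ⟨⟨_, inMD_poplus y.2 z.2 hyz⟩, ⟨hyz, rfl⟩, hxyz, hw.trans (poplus_assoc _ _ _)⟩

lemma odot_assoc (x y z w : MD Val Var) :
    (∃ t, w ∈ mdOdot t z ∧ t ∈ mdOdot x y) ↔ ∃ s, s ∈ mdOdot y z ∧ w ∈ mdOdot x s := by
  constructor
  · rintro ⟨t, ⟨htz, hw⟩, hxy, ht⟩
    rw [ht] at htz hw
    exact ⟨⟨_, inMD_podot y.2 z.2 htz⟩, ⟨htz, rfl⟩, hxy, hw.trans (podot_assoc hxy htz)⟩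
  · rintro ⟨s, ⟨hyz, hs⟩, hxs, hw⟩
    rw [hs] at hxs hw
    exact ⟨⟨_, inMD_podot x.2 y.2 hxs⟩,
      ⟨hyz, hw.trans (podot_assoc (b := y.1) hxs hyz).symm⟩, hxs, rfl⟩

lemma rev_exchange {x y z y₁ y₂ z₁ z₂ : MD Val Var} (hx : x ∈ mdOplus y z)
    (hy : y ∈ mdOdot y₁ y₂) (hz : z ∈ mdOdot z₁ z₂) :
    ∃ u v, u ∈ mdOplus y₁ z₁ ∧ v ∈ mdOplus y₂ z₂ ∧ x ∈ mdOdot u v := by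
  obtain ⟨hyz, hx⟩ := hx
  obtain ⟨hy₁₂, hy⟩ := hy
  obtain ⟨hz₁₂, hz⟩ := hz
  rw [hy, hz] at hyz hx
  obtain ⟨h₁, h₂, hov⟩ : OplusDef y₁.1 z₁.1 ∧ OplusDef y₂.1 z₂.1 ∧
      y₁.1.ran ∩ z₁.1.ran ⊆ y₁.1.dom ∩ z₁.1.dom := by
    have := y₁.2.1; have := y₂.2.1; have := z₁.2.1; have := z₂.2.1
    simp only [OplusDef, podot_ran, podot_dom, Set.ext_iff, Set.subset_def,
      Set.mem_inter_iff] at *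
    grind
  refine ⟨⟨_, inMD_poplus y₁.2 z₁.2 h₁⟩, ⟨_, inMD_poplus y₂.2 z₂.2 h₂⟩, ⟨h₁, rfl⟩, ⟨h₂, rfl⟩,
    congrArg₂ (· ∪ ·) hy₁₂ hz₁₂, ?_⟩
  exact hx.trans (podot_poplus_podot y₁.2.extendsInput z₁.2.extendsInput hy₁₂ hz₁₂ hov)

end MD

theorem MD_isDIBIFrame_general (Val Var : Type) :
    IsDIBIFrame (fun x y : MD Val Var => ple x.1 y.1) mdOplus mdOdot
      (Set.univ : Set (MD Val Var)) :=
  { le_refl x := ple_refl x.1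
    le_trans x _ _ := ple_trans x.2
    oplus_down _ _ _ _ _ := MD.oplus_down
    odot_up _ _ _ _ := MD.odot_up
    oplus_comm _ _ _ := MD.oplus_comm
    oplus_assoc _ _ _ _ _ := MD.oplus_assoc
    oplus_unit_exists x :=
      ⟨⟨_, PKernel.inMD_unitK ∅⟩, trivial, (Set.empty_inter _).trans (Set.empty_inter _).symm,
        by rw [PKernel.poplus_comm, PKernel.poplus_unitK_empty]⟩
    oplus_unit_coherence e x y _ hx := hx.2 ▸ ple_poplus y.2 e.2 hx.1
    odot_assoc := MD.odot_assoc
    odot_unit_exists_left x :=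
      ⟨⟨_, PKernel.inMD_unitK x.1.dom⟩, trivial, rfl, (PKernel.unitK_podot x.1).symm⟩
    odot_unit_exists_right x :=
      ⟨⟨_, PKernel.inMD_unitK x.1.ran⟩, trivial, rfl, (PKernel.podot_unitK x.1).symm⟩
    odot_coherence_right e x y _ hx := hx.2 ▸ ple_podot e.2 hx.1
    unit_closure _ _ _ _ := trivial
    rev_exchange _ _ _ _ _ _ _ := MD.rev_exchange }

/-- **The probabilistic model is a DIBI frame.** The structure
`(M^D, ⊑, ⊕, ⊙, M^D)` of input-preserving Markov kernels, with parallel and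
sequential composition and with every state a unit, satisfies all twelve DIBI
frame conditions (in particular, `⊑` is a preorder on `M^D`). -/
theorem MD_isDIBIFrame (Val Var : Type) [Fintype Val] [Fintype Var] :
    IsDIBIFrame (fun x y : MD Val Var => ple x.1 y.1) mdOplus mdOdot
      (Set.univ : Set (MD Val Var)) :=
  MD_isDIBIFrame_general Val Var
end
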